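/- Power sums are determined by the first elementary symmetric functions (§13–§14): Let R be a commutative ring, let k ≥ 1, and let s and t be multisets of elements of R with card s ≥ k and card t ≥ k. If e_i(s) = e_i(t) for all i with 1 ≤ i ≤ k, then p_j(s) = p_j(t) for all j with 1 ≤ j ≤ k. (Euler uses this for the auxiliary equations x - A = 0, x² - Ax + B = 0, x³ - Ax² + Bx - C = 0, etc., formed from the leading coefficients of a given equation: their roots p, q, r, s satisfy ∫α = ∫s = ∫r = ∫q = ∫p, ∫α² = ∫s² = ∫r² = ∫q², ∫α³ = ∫s³ = ∫r³, ∫α⁴ = ∫s⁴.) -/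

import Mathlib

/-! Newton's identities express `p_j` through `e_j` and the products `e_i p_(j-i)` with `0 < i < j`,
so by strong induction on `j` the first `k` power sums depend only on `e_1, …, e_k`. -/

def Multiset.psum {R : Type*} [CommRing R] (s : Multiset R) (k : ℕ) : R :=
  (s.map (· ^ k)).sum

open Finset MvPolynomial

theorem Multiset.exists_eq_univ_val_map {α : Type*} (s : Multiset α) :
    ∃ (n : ℕ) (f : Fin n → α), univ.val.map f = s :=
  ⟨_, s.toList.get, by rw [Fin.univ_val_map, List.ofFn_get, coe_toList]⟩

theorem MvPolynomial.aeval_psum_eq_multiset_psum {σ R S : Type*} [Fintype σ] [CommRing R]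
    [CommRing S] [Algebra R S] (f : σ → S) (n : ℕ) :
    aeval f (psum σ R n) = (univ.val.map f).psum n := by
  simp [psum, Multiset.psum, Multiset.map_map]

theorem Multiset.psum_eq_mul_esymm_sub_sum {R : Type*} [CommRing R] (s : Multiset R) {k : ℕ}
    (hk : 0 < k) :
    s.psum k = (-1) ^ (k + 1) * k * s.esymm k -
      ∑ a ∈ HasAntidiagonal.antidiagonal k with a.1 ∈ Set.Ioo 0 k,
        (-1) ^ a.1 * s.esymm a.1 * s.psum a.2 := by
  obtain ⟨n, f, rfl⟩ := s.exists_eq_univ_val_map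
  simpa [aeval_psum_eq_multiset_psum, aeval_esymm_eq_multiset_esymm] using
    congrArg (aeval f) (MvPolynomial.psum_eq_mul_esymm_sub_sum (Fin n) ℤ k hk)

theorem psum_eq_of_esymm_eq_general {R : Type*} [CommRing R] (k : ℕ)
    (s t : Multiset R)
    (he : ∀ i, 1 ≤ i → i ≤ k → s.esymm i = t.esymm i) :
    ∀ j, 1 ≤ j → j ≤ k → s.psum j = t.psum j := by
  intro j
  induction j using Nat.strong_induction_on with
  | _ j ih =>
    intro hj hjk
    rw [s.psum_eq_mul_esymm_sub_sum hj, t.psum_eq_mul_esymm_sub_sum hj, he j hj hjk]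
    congr 1
    refine sum_congr rfl fun a ha => ?_
    obtain ⟨hsum, hpos, hlt⟩ : a.1 + a.2 = j ∧ 0 < a.1 ∧ a.1 < j := by simpa using ha
    rw [he a.1 hpos (by omega), ih a.2 (by omega) (by omega) (by omega)]

/-- Power sums are determined by the first elementary symmetric functions (§13–§14):
if two multisets `s, t`, each of cardinality at least `k ≥ 1`, have the same elementary
symmetric functions `e_i` for `1 ≤ i ≤ k`, then they have the same power sums `p_j`
for `1 ≤ j ≤ k`. -/
theorem psum_eq_of_esymm_eq {R : Type*} [CommRing R] (k : ℕ) (hk : 1 ≤ k)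
    (s t : Multiset R) (hs : k ≤ Multiset.card s) (ht : k ≤ Multiset.card t)
    (he : ∀ i, 1 ≤ i → i ≤ k → s.esymm i = t.esymm i) :
    ∀ j, 1 ≤ j → j ≤ k → s.psum j = t.psum j :=
  psum_eq_of_esymm_eq_general k s t he
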